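/- arXiv:0810.4780 — 2 statements merged into one kernel-verified Lean document; each statement's English description precedes it below -/
import Mathlib

section
/- Let θ ∈ ℝ, Z a random variable with E[Z] = 0 and E[Z²] < ∞, y = θ + Z, and λ ≥ 0. Then E[(η_λ(y) − θ)²] ≤ 4λ² + 2·E[Z²·1{|Z| > λ}], where η_λ is the soft threshold function. -/
open MeasureTheory

lemma soft_dist {lam : ℝ} (hlam : 0 ≤ lam) (y : ℝ) :
    |Real.sign y * max (|y| - lam) 0 - y| ≤ lam := by
  rcases lt_trichotomy y 0 with h | h | h
  · rw [Real.sign_of_neg h, abs_of_neg h]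
    rcases le_or_gt (-y - lam) 0 with hm | hm
    · rw [max_eq_right hm, abs_le]; constructor <;> [linarith; linarith]
    · rw [max_eq_left hm.le, abs_le]; constructor <;> [linarith; linarith]
  · simp [h, Real.sign_zero, hlam]
  · rw [Real.sign_of_pos h, abs_of_pos h, one_mul]
    rcases le_or_gt (y - lam) 0 with hm | hm
    · rw [max_eq_right hm, abs_le]; constructor <;> [linarith; linarith]
    · rw [max_eq_left hm.le]
      have : y - lam - y = -lam := by ring
      rw [this, abs_neg, abs_of_nonneg hlam]

/-- For `y = θ + Z` with `E Z = 0` and `E Z² < ∞`,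
`E (η_λ(y) - θ)² ≤ 4λ² + 2 E[Z² 1{|Z| > λ}]`. -/
theorem soft_threshold_bound_one
    {Ω : Type*} [MeasurableSpace Ω] (μ : Measure Ω) [IsProbabilityMeasure μ]
    (Z : Ω → ℝ) (hZmeas : Measurable Z)
    (hZint : Integrable Z μ) (hZmean : ∫ ω, Z ω ∂μ = 0)
    (hZsq : MemLp Z 2 μ)
    (θ : ℝ) (lam : ℝ) (hlam : 0 ≤ lam)
    (η : ℝ → ℝ) (hη : ∀ x, η x = Real.sign x * max (|x| - lam) 0) :
    ∫ ω, (η (θ + Z ω) - θ) ^ 2 ∂μ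
      ≤ 4 * lam ^ 2 + 2 * ∫ ω in {ω | lam < |Z ω|}, (Z ω) ^ 2 ∂μ := by
  set S : Set Ω := {ω | lam < |Z ω|} with hS
  have hSmeas : MeasurableSet S := by
    apply measurableSet_lt measurable_const hZmeas.abs
  have hZ2 : Integrable (fun ω => (Z ω) ^ 2) μ := hZsq.integrable_sq
  set g : Ω → ℝ := fun ω => 4 * lam ^ 2 + 2 * S.indicator (fun ω => (Z ω) ^ 2) ω with hg
  have hgint : Integrable g μ := by
    apply Integrable.add (integrable_const _)
    exact ((hZ2.indicator hSmeas).const_mul 2)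
  have hpt : ∀ ω, (η (θ + Z ω) - θ) ^ 2 ≤ g ω := by
    intro ω
    set y := θ + Z ω with hy
    have hd : |η y - y| ≤ lam := by rw [hη]; exact soft_dist hlam y
    have hd2 : (η y - y) ^ 2 ≤ lam ^ 2 := by
      rw [← sq_abs]; exact pow_le_pow_left₀ (abs_nonneg _) hd 2
    have hz2 : (Z ω) ^ 2 ≤ lam ^ 2 + S.indicator (fun ω => (Z ω) ^ 2) ω := by
      by_cases h : ω ∈ S
      · rw [Set.indicator_of_mem h]; nlinarith [sq_nonneg lam]
      · rw [Set.indicator_of_notMem h]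
        simp only [hS, Set.mem_setOf_eq, not_lt] at h
        have := sq_abs (Z ω)
        nlinarith [abs_nonneg (Z ω)]
    have key : (η y - θ) ^ 2 ≤ 2 * (η y - y) ^ 2 + 2 * (y - θ) ^ 2 := by
      nlinarith [sq_nonneg (η y - y - (y - θ))]
    have hyθ : y - θ = Z ω := by rw [hy]; ring
    rw [hyθ] at key
    simp only [hg]
    nlinarith
  have hnn : 0 ≤ᵐ[μ] fun ω => (η (θ + Z ω) - θ) ^ 2 :=
    Filter.Eventually.of_forall fun ω => sq_nonneg _
  have hle : (fun ω => (η (θ + Z ω) - θ) ^ 2) ≤ᵐ[μ] g :=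
    Filter.Eventually.of_forall hpt
  calc ∫ ω, (η (θ + Z ω) - θ) ^ 2 ∂μ ≤ ∫ ω, g ω ∂μ :=
        integral_mono_of_nonneg hnn hgint hle
    _ = 4 * lam ^ 2 + 2 * ∫ ω in S, (Z ω) ^ 2 ∂μ := by
        rw [integral_add (integrable_const _) ((hZ2.indicator hSmeas).const_mul 2),
          integral_const, integral_const_mul, integral_indicator hSmeas]
        simp
end

section
/- Let θ ∈ ℝ, Z a random variable with E[Z²] < ∞, y = θ + Z, and λ ≥ 0. Then E[(η_λ(y) − θ)²] ≤ θ² + E[Z²·1{|Z| > λ}], where η_λ is the soft threshold function. -/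
open MeasureTheory

lemma soft_key (lam θ z : ℝ) (hlam : 0 ≤ lam) :
    (Real.sign (θ + z) * max (|θ + z| - lam) 0 - θ) ^ 2
      ≤ θ ^ 2 + (if lam < |z| then z ^ 2 else 0) := by
  have hind : (0:ℝ) ≤ (if lam < |z| then z ^ 2 else 0) := by positivity
  rcases le_or_gt (|θ + z|) lam with h | h
  · rw [max_eq_right (by linarith)]
    nlinarith
  · rcases lt_abs.mp h with hpos | hneg
    · have hy0 : 0 < θ + z := lt_of_le_of_lt hlam hpos
      rw [Real.sign_of_pos hy0, abs_of_pos hy0,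
        max_eq_left (by linarith)]
      rcases le_or_gt z lam with hz | hz
      · have h1 : 0 < θ - (lam - z) := by linarith
        have h2 : 0 < θ + (lam - z) := by linarith
        nlinarith [mul_pos h1 h2]
      · rw [if_pos (lt_of_lt_of_le hz (le_abs_self z))]
        nlinarith
    · have hy0 : θ + z < 0 := by linarith
      rw [Real.sign_of_neg hy0, abs_of_neg hy0,
        max_eq_left (by linarith)]
      rcases le_or_gt (-lam) z with hz | hz
      · have h1 : 0 < -θ - (lam + z) := by linarith
        have h2 : 0 < -θ + (lam + z) := by linarith
        nlinarith [mul_pos h1 h2]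
      · rw [if_pos (by rw [abs_of_neg (by linarith)]; linarith)]
        nlinarith

/-- For `y = θ + Z` with `E Z² < ∞`,
`E (η_λ(y) - θ)² ≤ θ² + E[Z² 1{|Z| > λ}]`. -/
theorem soft_threshold_bound_two
    {Ω : Type*} [MeasurableSpace Ω] (μ : Measure Ω) [IsProbabilityMeasure μ]
    (Z : Ω → ℝ) (hZmeas : Measurable Z)
    (hZsq : MemLp Z 2 μ)
    (θ : ℝ) (lam : ℝ) (hlam : 0 ≤ lam)
    (η : ℝ → ℝ) (hη : ∀ x, η x = Real.sign x * max (|x| - lam) 0) :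
    ∫ ω, (η (θ + Z ω) - θ) ^ 2 ∂μ
      ≤ θ ^ 2 + ∫ ω in {ω | lam < |Z ω|}, (Z ω) ^ 2 ∂μ := by
  have hset : MeasurableSet {ω | lam < |Z ω|} :=
    measurableSet_lt measurable_const hZmeas.abs
  have hZ2 : Integrable (fun ω => (Z ω) ^ 2) μ := by
    have := hZsq.integrable_sq
    simpa [sq] using this
  have hInd : Integrable
      (fun ω => Set.indicator {ω | lam < |Z ω|} (fun ω => (Z ω) ^ 2) ω) μ :=
    hZ2.indicator hset
  calc ∫ ω, (η (θ + Z ω) - θ) ^ 2 ∂μ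
      ≤ ∫ ω, (θ ^ 2 + Set.indicator {ω | lam < |Z ω|} (fun ω => (Z ω) ^ 2) ω) ∂μ := by
        refine integral_mono_of_nonneg (ae_of_all _ fun ω => sq_nonneg _)
          ((integrable_const _).add hInd) (ae_of_all _ fun ω => ?_)
        have := soft_key lam θ (Z ω) hlam
        simp only [hη]
        simpa [Set.indicator_apply, Set.mem_setOf_eq] using this
    _ = θ ^ 2 + ∫ ω in {ω | lam < |Z ω|}, (Z ω) ^ 2 ∂μ := by
        rw [integral_add (integrable_const _) hInd, integral_const, probReal_univ,
          smul_eq_mul, one_mul, integral_indicator hset]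
end
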